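/- arXiv:1402.2260 — 8 statements merged into one kernel-verified Lean document; each statement's English description precedes it below -/
import Mathlib

section
/- Let C be a polyomino class. Let C⁺ be the set of binary matrices that occur as a submatrix of some polyomino in C, and let 𝓜 be the set of binary matrices not in C⁺ that are minimal for the submatrix order among binary matrices not in C⁺ (the canonical m-basis of C). Then C = Av_P(𝓜), the set of polyominoes containing no element of 𝓜 as a submatrix. -/
/-- A binary matrix: entries in `Bool`, rows indexed bottom-to-top by `Fin m`. -/
structure BMat where
  m : ℕ
  n : ℕ
  entry : Fin m → Fin n → Bool

/-- Submatrix order: `A` is obtained from `B` by deleting rows and columns. -/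
def BMat.Sub (A B : BMat) : Prop :=
  ∃ (f : Fin A.m → Fin B.m) (g : Fin A.n → Fin B.n),
    StrictMono f ∧ StrictMono g ∧ ∀ i j, A.entry i j = B.entry (f i) (g j)

/-- Edge-adjacency of cells: `|i-i'| + |j-j'| = 1`. -/
def CellAdj {m n : ℕ} (a b : Fin m × Fin n) : Prop :=
  ((a.1 : ℕ) = (b.1 : ℕ) ∧ ((a.2 : ℕ) + 1 = (b.2 : ℕ) ∨ (b.2 : ℕ) + 1 = (a.2 : ℕ))) ∨
  ((a.2 : ℕ) = (b.2 : ℕ) ∧ ((a.1 : ℕ) + 1 = (b.1 : ℕ) ∨ (b.1 : ℕ) + 1 = (a.1 : ℕ)))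

/-- A polyomino, represented by its binary matrix: the set of `1`-entries is nonempty,
edge-connected, and each of the first/last rows and columns contains a `1`. -/
def IsPolyomino (P : BMat) : Prop :=
  (∃ i j, P.entry i j = true) ∧
  (∀ a b : Fin P.m × Fin P.n, P.entry a.1 a.2 = true → P.entry b.1 b.2 = true →
    Relation.ReflTransGen
      (fun x y => P.entry x.1 x.2 = true ∧ P.entry y.1 y.2 = true ∧ CellAdj x y) a b) ∧
  (∃ i j, P.entry i j = true ∧ (i : ℕ) = 0) ∧
  (∃ i j, P.entry i j = true ∧ (i : ℕ) = P.m - 1) ∧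
  (∃ i j, P.entry i j = true ∧ (j : ℕ) = 0) ∧
  (∃ i j, P.entry i j = true ∧ (j : ℕ) = P.n - 1)


lemma BMat.Sub.refl (A : BMat) : BMat.Sub A A :=
  ⟨id, id, strictMono_id, strictMono_id, fun _ _ => rfl⟩

lemma BMat.Sub.trans {A B D : BMat} (h1 : BMat.Sub A B) (h2 : BMat.Sub B D) :
    BMat.Sub A D := by
  obtain ⟨f, g, hf, hg, he⟩ := h1
  obtain ⟨f', g', hf', hg', he'⟩ := h2
  exact ⟨f' ∘ f, g' ∘ g, hf'.comp hf, hg'.comp hg, fun i j => (he i j).trans (he' (f i) (g j))⟩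

lemma BMat.Sub.m_le {A B : BMat} (h : BMat.Sub A B) : A.m ≤ B.m := by
  obtain ⟨f, g, hf, hg, he⟩ := h
  simpa using Fintype.card_le_of_injective f hf.injective

lemma BMat.Sub.n_le {A B : BMat} (h : BMat.Sub A B) : A.n ≤ B.n := by
  obtain ⟨f, g, hf, hg, he⟩ := h
  simpa using Fintype.card_le_of_injective g hg.injective

lemma strictMono_fin_id {k : ℕ} {f : Fin k → Fin k} (hf : StrictMono f) : f = id := by
  have hs : Function.Surjective f := Finite.surjective_of_injective hf.injective
  have h : StrictMono.orderIsoOfSurjective f hf hs = OrderIso.refl (Fin k) :=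
    Subsingleton.elim _ _
  funext i
  exact congrArg (fun e : Fin k ≃o Fin k => e i) h

lemma BMat.Sub.eq_of_dims {A B : BMat} (h : BMat.Sub A B)
    (hm : A.m = B.m) (hn : A.n = B.n) : A = B := by
  obtain ⟨m, n, E⟩ := A
  obtain ⟨m', n', E'⟩ := B
  dsimp at hm hn
  subst hm; subst hn
  obtain ⟨f, g, hf, hg, he⟩ := h
  rw [strictMono_fin_id hf, strictMono_fin_id hg] at he
  simp only [id] at he
  congr 1
  funext i j
  exact he i j

theorem stmt_6 (C : Set BMat) (hCpoly : ∀ P ∈ C, IsPolyomino P)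
    (hC : ∀ P ∈ C, ∀ Q, IsPolyomino Q → BMat.Sub Q P → Q ∈ C) :
    C = {P : BMat | IsPolyomino P ∧ ∀ M : BMat,
      ((¬ ∃ R ∈ C, BMat.Sub M R) ∧
        ∀ M' : BMat, (¬ ∃ R ∈ C, BMat.Sub M' R) → BMat.Sub M' M → M' = M) →
      ¬ BMat.Sub M P} := by

  ext P
  constructor
  · intro hP
    refine ⟨hCpoly P hP, fun M ⟨hM1, _⟩ hMP => hM1 ⟨P, hP, hMP⟩⟩
  · rintro ⟨hPpoly, havoid⟩
    by_contra hPC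
    -- P is not in C⁺
    have hPnot : ¬ ∃ R ∈ C, BMat.Sub P R := by
      rintro ⟨R, hR, hPR⟩
      exact hPC (hC R hR P hPpoly hPR)
    set S : Set BMat := {M | BMat.Sub M P ∧ ¬ ∃ R ∈ C, BMat.Sub M R} with hSdef
    have hSne : S.Nonempty := ⟨P, BMat.Sub.refl P, hPnot⟩
    obtain ⟨M, hMS, hmin⟩ :=
      (InvImage.wf (fun M : BMat => M.m + M.n) Nat.lt_wfRel.wf).has_min S hSne
    refine havoid M ⟨hMS.2, fun M' hM' hsub => ?_⟩ hMS.1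
    have hM'S : M' ∈ S := ⟨hsub.trans hMS.1, hM'⟩
    have hle : M.m + M.n ≤ M'.m + M'.n := not_lt.1 (hmin M' hM'S)
    have h1 := hsub.m_le
    have h2 := hsub.n_le
    exact hsub.eq_of_dims (by omega) (by omega)
end

section
/- If the p-basis of a permutation class C (identified with the set of permutation matrices of its elements) is also a minimal m-basis of C, then it is the unique minimal m-basis of C: every minimal m-basis of C equals the p-basis. -/
/-- A permutation of arbitrary size. -/
abbrev Perm' := Σ n : ℕ, Equiv.Perm (Fin n)

/-- `PPat π σ` : `π` is a (classical) pattern of `σ`. -/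
def PPat (π σ : Perm') : Prop :=
  ∃ f : Fin π.1 → Fin σ.1, StrictMono f ∧
    ∀ a b, π.2 a < π.2 b ↔ σ.2 (f a) < σ.2 (f b)

/-- The permutation matrix of `σ` : `M_σ(i,j) = 1` iff `i = σ(j)`. -/
def permMat (σ : Perm') : BMat :=
  ⟨σ.1, σ.1, fun i j => decide (i = σ.2 j)⟩

/-- A quasi-permutation matrix: at most one `1` in each row and each column. -/
def QuasiPerm (M : BMat) : Prop :=
  (∀ i j j', M.entry i j = true → M.entry i j' = true → j = j') ∧
  (∀ i i' j, M.entry i j = true → M.entry i' j = true → i = i')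

/-- The set of permutations whose permutation matrix avoids every matrix in `Ms`. -/
def AvS (Ms : Set BMat) : Set Perm' :=
  {σ | ∀ M ∈ Ms, ¬ BMat.Sub M (permMat σ)}

/-- An m-basis of `C`: an antichain of matrices whose avoidance characterizes `C`. -/
def IsMBasis (C : Set Perm') (Ms : Set BMat) : Prop :=
  IsAntichain BMat.Sub Ms ∧ C = AvS Ms

/-- A minimal m-basis of `C`. -/
def IsMinimalMBasis (C : Set Perm') (Ms : Set BMat) : Prop :=
  IsMBasis C Ms ∧
  (∀ Ms' : Set BMat, Ms' ⊂ Ms → C ≠ AvS Ms') ∧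
  (∀ M ∈ Ms, ∀ M' : BMat, BMat.Sub M' M →
    M' = M ∨ C ≠ AvS ((Ms \ {M}) ∪ {M'}))

/-- The canonical m-basis of `C`: the minimal quasi-permutation matrices which occur
as a submatrix of no permutation matrix of an element of `C`. -/
def CanonMBasis (C : Set Perm') : Set BMat :=
  {M | QuasiPerm M ∧ (¬ ∃ σ ∈ C, BMat.Sub M (permMat σ)) ∧
    ∀ M' : BMat, QuasiPerm M' → (¬ ∃ σ ∈ C, BMat.Sub M' (permMat σ)) →
      BMat.Sub M' M → M' = M}

/-- The p-basis of a permutation class: the minimal permutations not in `C`. -/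
def pBasis (C : Set Perm') : Set Perm' :=
  {π | π ∉ C ∧ ∀ τ, τ ∉ C → PPat τ π → τ = π}

-- strict mono endo of Fin n is id
lemma smono_id {n : ℕ} {f : Fin n → Fin n} (hf : StrictMono f) : f = id := by
  have hsurj : Function.Surjective f := Finite.injective_iff_surjective.mp hf.injective
  funext i
  have h1 := Fin.coe_orderIso_apply (StrictMono.orderIsoOfSurjective f hf hsurj) i
  rw [StrictMono.coe_orderIsoOfSurjective f hf hsurj] at h1
  exact Fin.ext h1

lemma sub_trans {A B D : BMat} (h1 : A.Sub B) (h2 : B.Sub D) : A.Sub D := by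
  obtain ⟨f, g, hf, hg, he⟩ := h1
  obtain ⟨f', g', hf', hg', he'⟩ := h2
  exact ⟨f' ∘ f, g' ∘ g, hf'.comp hf, hg'.comp hg, fun i j => (he i j).trans (he' _ _)⟩

lemma ppat_refl (σ : Perm') : PPat σ σ := ⟨id, strictMono_id, fun _ _ => Iff.rfl⟩

lemma ppat_trans {π τ σ : Perm'} (h1 : PPat π τ) (h2 : PPat τ σ) : PPat π σ := by
  obtain ⟨f, hf, he⟩ := h1
  obtain ⟨f', hf', he'⟩ := h2
  exact ⟨f' ∘ f, hf'.comp hf, fun a b => (he a b).trans (he' _ _)⟩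

lemma ppat_eq {π σ : Perm'} (h : PPat π σ) (hn : π.1 = σ.1) : π = σ := by
  obtain ⟨n, p⟩ := π
  obtain ⟨m, q⟩ := σ
  simp only at hn
  subst hn
  obtain ⟨f, hf, he⟩ := h
  have hfid : f = id := smono_id hf
  subst hfid
  have : StrictMono (fun i => q (p.symm i)) := by
    intro i j hij
    exact (he (p.symm i) (p.symm j)).1 (by simpa using hij)
  have hid := smono_id this
  have hq : q = p := Equiv.ext fun j => by simpa using congrFun hid (p j)
  simp [hq]

lemma ppat_size_lt {π σ : Perm'} (h : PPat π σ) (hne : π ≠ σ) : π.1 < σ.1 := by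
  obtain ⟨f, hf, -⟩ := id h
  have hle : π.1 ≤ σ.1 := by
    have := Fintype.card_le_of_injective f hf.injective
    simpa using this
  rcases lt_or_eq_of_le hle with h' | h'
  · exact h'
  · exact absurd (ppat_eq h h') hne

lemma ppat_permMat {π σ : Perm'} (h : PPat π σ) : (permMat π).Sub (permMat σ) := by
  obtain ⟨f, hf, he⟩ := h
  refine ⟨fun i => σ.2 (f (π.2.symm i)), f, ?_, hf, ?_⟩
  · intro i j hij
    exact (he (π.2.symm i) (π.2.symm j)).1 (by rw [π.2.apply_symm_apply i, π.2.apply_symm_apply j]; exact hij)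
  · intro i j
    simp only [permMat]
    apply decide_eq_decide.2
    constructor
    · rintro rfl; rw [π.2.symm_apply_apply j]
    · intro hq
      have := σ.2.injective (hq.symm)
      have h2 := hf.injective this
      rw [h2, π.2.apply_symm_apply i]

lemma exists_basis_pat (C : Set Perm') :
    ∀ N, ∀ σ : Perm', σ.1 ≤ N → σ ∉ C →
      ∃ π, (π ∉ C ∧ ∀ τ, τ ∉ C → PPat τ π → τ = π) ∧ PPat π σ := by
  intro N
  induction N with
  | zero => intro σ hσ hc;
            refine ⟨σ, ⟨hc, fun τ hτ hp => ?_⟩, ppat_refl σ⟩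
            by_contra hne
            have := ppat_size_lt hp hne
            omega
  | succ N ih =>
    intro σ hσ hc
    by_cases hb : ∀ τ, τ ∉ C → PPat τ σ → τ = σ
    · exact ⟨σ, ⟨hc, hb⟩, ppat_refl σ⟩
    · push_neg at hb
      obtain ⟨τ, hτc, hτp, hτne⟩ := hb
      have hlt := ppat_size_lt hτp hτne
      obtain ⟨π, hπ, hp⟩ := ih τ (by omega) hτc
      exact ⟨π, hπ, ppat_trans hp hτp⟩

theorem stmt_8 (C : Set Perm') (hC : ∀ σ ∈ C, ∀ π, PPat π σ → π ∈ C)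
    (h : IsMinimalMBasis C (permMat '' pBasis C)) :
    ∀ Ms : Set BMat, IsMinimalMBasis C Ms → Ms = permMat '' pBasis C := by
  intro Ms hMs
  obtain ⟨⟨hPanti, hPC⟩, hPmin1, hPmin3⟩ := h
  obtain ⟨⟨hManti, hMC⟩, hMmin1, hMmin3⟩ := hMs
  have hsub : Ms ⊆ permMat '' pBasis C := by
    intro M hM
    have hss : Ms \ {M} ⊂ Ms := by
      refine Set.ssubset_iff_subset_ne.mpr ⟨Set.diff_subset, fun heq => ?_⟩
      have := heq ▸ hM
      exact this.2 rfl
    have hne : C ≠ AvS (Ms \ {M}) := hMmin1 _ hss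
    have hmono : AvS Ms ⊆ AvS (Ms \ {M}) := fun σ hσ N hN => hσ N hN.1
    have hCsub : C ⊆ AvS (Ms \ {M}) := by rw [hMC]; exact hmono
    have hnsub : ¬ AvS (Ms \ {M}) ⊆ C := fun hss' =>
      hne (Set.Subset.antisymm hCsub hss')
    obtain ⟨σ, hσav, hσc⟩ := Set.not_subset.mp hnsub
    obtain ⟨π, hπb, hπp⟩ := exists_basis_pat C σ.1 σ le_rfl hσc
    have hπσ : (permMat π).Sub (permMat σ) := ppat_permMat hπp
    have hπnc : π ∉ AvS Ms := by rw [← hMC]; exact hπb.1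
    have hex : ∃ M₁ ∈ Ms, BMat.Sub M₁ (permMat π) := by
      by_contra hno
      push_neg at hno
      exact hπnc fun N hN => hno N hN
    obtain ⟨M₁, hM₁, hM₁sub⟩ := hex
    have hM₁eq : M₁ = M := by
      by_contra hne₁
      exact hσav M₁ ⟨hM₁, hne₁⟩ (sub_trans hM₁sub hπσ)
    subst hM₁eq
    have hMem : permMat π ∈ permMat '' pBasis C := ⟨π, hπb, rfl⟩
    rcases hPmin3 (permMat π) hMem M₁ hM₁sub with heq | hne2
    · rw [heq]; exact hMem
    · exfalso
      apply hne2
      ext τ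
      constructor
      · intro hτ N hN
        rcases hN with ⟨hNP, -⟩ | hNM
        · have : τ ∈ AvS (permMat '' pBasis C) := by rw [← hPC]; exact hτ
          exact this N hNP
        · have hτM : τ ∈ AvS Ms := by rw [← hMC]; exact hτ
          rw [Set.mem_singleton_iff] at hNM
          rw [hNM]
          exact hτM M₁ hM₁
      · intro hτ
        by_contra hτc
        have hτP : τ ∉ AvS (permMat '' pBasis C) := by rw [← hPC]; exact hτc
        have hexN : ∃ N ∈ permMat '' pBasis C, BMat.Sub N (permMat τ) := by
          by_contra hno
          push_neg at hno
          exact hτP fun N hN => hno N hN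
        obtain ⟨N, hNP, hNsub⟩ := hexN
        by_cases hNe : N = permMat π
        · refine hτ M₁ (Or.inr rfl) (sub_trans hM₁sub ?_)
          rw [← hNe]; exact hNsub
        · exact hτ N (Or.inl ⟨hNP, hNe⟩) hNsub
  by_contra hneq
  exact hPmin1 Ms ⟨hsub, fun h' => hneq (Set.Subset.antisymm hsub h')⟩ hMC
end

section
/- Let M be a quasi-permutation matrix. The permutations that contain M as a submatrix of their permutation matrix and are minimal for the pattern order ≼ with this property are exactly the permutations σ such that M_σ can be obtained from M by inserting rows each containing exactly one entry 1, that entry lying in a column of M consisting entirely of 0s, and inserting columns each containing exactly one entry 1, that entry lying in a row of M consisting entirely of 0s. -/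
lemma finStrictMono_id {n : ℕ} {f : Fin n → Fin n} (h : StrictMono f) : ∀ x, f x = x := by
  have hsurj : Function.Surjective f := Finite.surjective_of_injective h.injective
  have hr : Set.range f = Set.range (id : Fin n → Fin n) := by
    rw [hsurj.range_eq, Set.range_id]
  haveI : WellFoundedLT (Fin n) := inferInstance
  exact fun x => congrFun ((h.range_inj strictMono_id).1 hr) x

/-- Deleting a point `c` (and the corresponding value `s c`) from a permutation:
if no row/column of the embedding of `M` uses them, `M` embeds into the smaller
permutation, which is a pattern of the original. -/
lemma delete_lemma (M : BMat) {N : ℕ} (s : Equiv.Perm (Fin (N + 1)))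
    (f : Fin M.m → Fin (N + 1)) (g : Fin M.n → Fin (N + 1))
    (hf : StrictMono f) (hg : StrictMono g)
    (hent : ∀ i j, M.entry i j = decide (f i = s (g j)))
    (c : Fin (N + 1)) (hr : ∀ i, f i ≠ s c) (hc : ∀ j, g j ≠ c) :
    ∃ τ : Equiv.Perm (Fin N),
      BMat.Sub M (permMat ⟨N, τ⟩) ∧ PPat ⟨N, τ⟩ ⟨N + 1, s⟩ := by
  classical
  set e : Option (Fin N) ≃ Option (Fin N) :=
    (finSuccEquiv' c).symm.trans (s.trans (finSuccEquiv' (s c))) with he_def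
  set τ := Equiv.removeNone e with hτdef
  have hkey : ∀ j, (s c).succAbove (τ j) = s (c.succAbove j) := by
    intro j
    have h1 : s (c.succAbove j) ≠ s c := fun h => Fin.succAbove_ne c j (s.injective h)
    obtain ⟨y, hy⟩ := Fin.exists_succAbove_eq h1
    have he : e (some j) = some y := by
      simp only [he_def, Equiv.trans_apply, finSuccEquiv'_symm_some]
      rw [← hy, finSuccEquiv'_succAbove]
    have h2 : some (τ j) = some y := by
      rw [hτdef, Equiv.removeNone_some e ⟨y, he⟩, he]
    rw [Option.some_injective _ h2, hy]
  choose f₂ hf₂ using fun i => Fin.exists_succAbove_eq (hr i)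
  choose g₂ hg₂ using fun j => Fin.exists_succAbove_eq (hc j)
  refine ⟨τ, ⟨f₂, g₂, ?_, ?_, ?_⟩, c.succAbove, Fin.strictMono_succAbove c, ?_⟩
  · intro a b hab
    have : (s c).succAbove (f₂ a) < (s c).succAbove (f₂ b) := by
      rw [hf₂, hf₂]; exact hf hab
    exact (Fin.strictMono_succAbove (s c)).lt_iff_lt.1 this
  · intro a b hab
    have : c.succAbove (g₂ a) < c.succAbove (g₂ b) := by
      rw [hg₂, hg₂]; exact hg hab
    exact (Fin.strictMono_succAbove c).lt_iff_lt.1 this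
  · intro i j
    have h3 : (s c).succAbove (τ (g₂ j)) = s (g j) := by rw [hkey, hg₂]
    show M.entry i j = decide (f₂ i = τ (g₂ j))
    rw [hent i j, ← hf₂ i, ← h3]
    simp [Fin.succAbove_right_injective.eq_iff]
  · intro a b
    show τ a < τ b ↔ s (c.succAbove a) < s (c.succAbove b)
    rw [← hkey a, ← hkey b]
    exact ((Fin.strictMono_succAbove (s c)).lt_iff_lt).symm

theorem stmt_10 (M : BMat) (hM : QuasiPerm M) (σ : Perm') :
    (BMat.Sub M (permMat σ) ∧
      ∀ τ : Perm', BMat.Sub M (permMat τ) → PPat τ σ → τ = σ) ↔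
    ∃ (f : Fin M.m → Fin σ.1) (g : Fin M.n → Fin σ.1),
      StrictMono f ∧ StrictMono g ∧
      (∀ i j, M.entry i j = (permMat σ).entry (f i) (g j)) ∧
      (∀ r : Fin σ.1, (∀ i, f i ≠ r) →
        ∃ j : Fin M.n, (permMat σ).entry r (g j) = true ∧
          ∀ i, M.entry i j = false) ∧
      (∀ c : Fin σ.1, (∀ j, g j ≠ c) →
        ∃ i : Fin M.m, (permMat σ).entry (f i) c = true ∧
          ∀ j, M.entry i j = false) := by
  classical
  obtain ⟨N, s⟩ := σ
  constructor
  · rintro ⟨⟨f, g, hf, hg, hent⟩, hmin⟩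
    have hent' : ∀ i j, M.entry i j = @decide (f i = s (g j)) (instDecidableEqFin _ _ _) := hent
    have hno : ∀ c : Fin N, (∀ i, f i ≠ s c) → (∀ j, g j ≠ c) → False := by
      intro c hrc hcc
      have hN : N ≠ 0 := fun h => (h ▸ c).elim0
      obtain ⟨N', rfl⟩ := Nat.exists_eq_succ_of_ne_zero hN
      obtain ⟨τ, hsub, hpat⟩ := delete_lemma M s f g hf hg hent' c hrc hcc
      have heq := hmin ⟨N', τ⟩ hsub hpat
      have := congrArg Sigma.fst heq
      simp at this
    refine ⟨f, g, hf, hg, hent, ?_, ?_⟩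
    · intro r hr
      by_cases hgc : ∃ j, g j = s.symm r
      · obtain ⟨j, hj⟩ := hgc
        refine ⟨j, ?_, ?_⟩
        · show decide (r = s (g j)) = true
          rw [hj]; simp
        · intro i
          rw [hent' i j, hj]
          exact @decide_eq_false _ (instDecidableEqFin _ _ _) (by rw [Equiv.apply_symm_apply]; exact hr i)
      · rw [not_exists] at hgc
        exact (hno (s.symm r) (fun i hi => hr i (by rwa [Equiv.apply_symm_apply] at hi)) (fun j hj => hgc j hj)).elim
    · intro c hc
      by_cases hfr : ∃ i, f i = s c
      · obtain ⟨i, hi⟩ := hfr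
        refine ⟨i, ?_, ?_⟩
        · show @decide (f i = s c) (instDecidableEqFin _ _ _) = true
          rw [hi]; exact @decide_eq_true _ (instDecidableEqFin _ _ _) rfl
        · intro j
          rw [hent' i j, hi]
          have : s c ≠ s (g j) := fun h => (hc j) (s.injective h).symm
          exact @decide_eq_false _ (instDecidableEqFin _ _ _) this
      · rw [not_exists] at hfr
        exact (hno c (fun i hi => hfr i hi) (fun j hj => hc j hj)).elim
  · rintro ⟨f, g, hf, hg, hent, hrow, hcol⟩
    refine ⟨⟨f, g, hf, hg, hent⟩, ?_⟩
    rintro ⟨nτ, τ⟩ ⟨f₁, g₁, hf₁, hg₁, hent₁⟩ ⟨h, hh, hpat⟩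
    have hent₁' : ∀ i j, M.entry i j = @decide (f₁ i = τ (g₁ j)) (instDecidableEqFin _ _ _) := hent₁
    have hent' : ∀ i j, M.entry i j = @decide (f i = s (g j)) (instDecidableEqFin _ _ _) := hent
    -- N ≤ nτ via an injection
    have hmain : ∀ r : Fin N, ∃ x : Fin nτ,
        (∃ i, f i = r ∧ x = f₁ i) ∨
        (∃ j, r = s (g j) ∧ (∀ i, M.entry i j = false) ∧ x = τ (g₁ j)) := by
      intro r
      by_cases hex : ∃ i, f i = r
      · obtain ⟨i, hi⟩ := hex
        exact ⟨f₁ i, Or.inl ⟨i, hi, rfl⟩⟩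
      · push_neg at hex
        obtain ⟨j, h1, h2⟩ := hrow r hex
        have h1' : r = s (g j) := of_decide_eq_true h1
        exact ⟨τ (g₁ j), Or.inr ⟨j, h1', h2, rfl⟩⟩
    choose Θ hΘ using hmain
    have hinj : Function.Injective Θ := by
      intro r r' hrr
      rcases hΘ r with ⟨i, hfi, hx⟩ | ⟨j, hsj, hz, hx⟩ <;>
        rcases hΘ r' with ⟨i', hfi', hx'⟩ | ⟨j', hsj', hz', hx'⟩
      · rw [← hfi, ← hfi']
        rw [hx, hx'] at hrr
        rw [hf₁.injective hrr]
      · exfalso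
        rw [hx, hx'] at hrr
        have : M.entry i j' = true := by
          rw [hent₁' i j']
          exact @decide_eq_true _ (instDecidableEqFin _ _ _) hrr
        rw [hz' i] at this; exact Bool.false_ne_true this
      · exfalso
        rw [hx, hx'] at hrr
        have : M.entry i' j = true := by
          rw [hent₁' i' j]
          exact @decide_eq_true _ (instDecidableEqFin _ _ _) hrr.symm
        rw [hz i'] at this; exact Bool.false_ne_true this
      · rw [hx, hx'] at hrr
        have := hg₁.injective (τ.injective hrr)
        rw [hsj, hsj', this]
    have hNτ : N ≤ nτ := by simpa using Fintype.card_le_of_injective Θ hinj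
    have hτN : nτ ≤ N := by simpa using Fintype.card_le_of_injective h hh.injective
    have hEq : nτ = N := le_antisymm hτN hNτ
    subst hEq
    have hid : ∀ x, h x = x := finStrictMono_id hh
    have hpat' : ∀ a b, τ a < τ b ↔ s a < s b := by
      intro a b
      have := hpat a b
      rwa [hid a, hid b] at this
    have hk : StrictMono (fun x => τ (s.symm x)) := by
      intro a b hab
      exact (hpat' (s.symm a) (s.symm b)).2 (by simpa using hab)
    have hts : ∀ x, τ x = s x := by
      intro x
      have := finStrictMono_id hk (s x)
      simpa using this
    have : τ = s := Equiv.ext hts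
    rw [this]
end

section
/- If a permutation class C has a finite m-basis, i.e., there is a finite set 𝓜 of quasi-permutation matrices with C = Av_S(𝓜), then the p-basis of C is finite. -/
/-- Delete the point at position `c` (and value `σ c`) from `σ`. -/
def delPt {n : ℕ} (σ : Equiv.Perm (Fin (n+1))) (c : Fin (n+1)) : Equiv.Perm (Fin n) :=
  Equiv.removeNone ((finSuccEquiv' c).symm.trans (σ.trans (finSuccEquiv' (σ c))))

lemma delPt_spec {n : ℕ} (σ : Equiv.Perm (Fin (n+1))) (c : Fin (n+1)) (j : Fin n) :
    σ (c.succAbove j) = (σ c).succAbove (delPt σ c j) := by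
  obtain ⟨k, hk⟩ := Fin.exists_succAbove_eq
    (show σ (c.succAbove j) ≠ σ c from fun h => Fin.succAbove_ne c j (σ.injective h))
  have he : ((finSuccEquiv' c).symm.trans (σ.trans (finSuccEquiv' (σ c)))) (some j) = some k := by
    simp only [Equiv.trans_apply, finSuccEquiv'_symm_some, Equiv.coe_fn_mk]
    rw [← hk, finSuccEquiv'_succAbove]
  have h2 := Equiv.removeNone_some _ ⟨k, he⟩
  rw [he] at h2
  rw [← hk]
  congr 1
  exact (Option.some_injective _ h2).symm

lemma delPt_ppat {n : ℕ} (σ : Equiv.Perm (Fin (n+1))) (c : Fin (n+1)) :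
    PPat ⟨n, delPt σ c⟩ ⟨n+1, σ⟩ := by
  refine ⟨c.succAbove, Fin.strictMono_succAbove c, fun a b => ?_⟩
  show delPt σ c a < delPt σ c b ↔ σ (c.succAbove a) < σ (c.succAbove b)
  rw [delPt_spec, delPt_spec]
  exact ((Fin.strictMono_succAbove (σ c)).lt_iff_lt).symm

lemma delPt_sub {n : ℕ} (M : BMat) (σ : Equiv.Perm (Fin (n+1))) (c : Fin (n+1))
    (f : Fin M.m → Fin (n+1)) (g : Fin M.n → Fin (n+1))
    (hf : StrictMono f) (hg : StrictMono g)
    (hent : ∀ i j, M.entry i j = (permMat ⟨n+1, σ⟩).entry (f i) (g j))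
    (hcg : ∀ j, g j ≠ c) (hcf : ∀ i, f i ≠ σ c) :
    BMat.Sub M (permMat ⟨n, delPt σ c⟩) := by
  choose g' hg' using fun j => Fin.exists_succAbove_eq (hcg j)
  choose f' hf' using fun i => Fin.exists_succAbove_eq (hcf i)
  refine ⟨f', g', ?_, ?_, ?_⟩
  · intro a b hab
    have := hf hab
    rw [← hf' a, ← hf' b] at this
    exact (Fin.strictMono_succAbove _).lt_iff_lt.mp this
  · intro a b hab
    have := hg hab
    rw [← hg' a, ← hg' b] at this
    exact (Fin.strictMono_succAbove _).lt_iff_lt.mp this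
  · intro i j
    rw [hent i j]
    show decide (f i = σ (g j)) = decide (f' i = delPt σ c (g' j))
    rw [decide_eq_decide]
    rw [← hg' j, delPt_spec, ← hf' i]
    exact (Fin.succAbove_right_injective).eq_iff

lemma exists_free (M : BMat) {n : ℕ} (σ : Equiv.Perm (Fin (n+1)))
    (f : Fin M.m → Fin (n+1)) (g : Fin M.n → Fin (n+1)) (hn : M.m + M.n < n+1) :
    ∃ c, (∀ j, g j ≠ c) ∧ (∀ i, f i ≠ σ c) := by
  classical
  set S : Finset (Fin (n+1)) :=
    Finset.image g Finset.univ ∪ Finset.image (fun i => σ.symm (f i)) Finset.univ with hS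
  have hcard : S.card < n+1 := by
    calc S.card ≤ (Finset.image g Finset.univ).card
          + (Finset.image (fun i => σ.symm (f i)) Finset.univ).card := Finset.card_union_le _ _
      _ ≤ M.n + M.m := by
          gcongr <;> exact Finset.card_image_le.trans (by simp)
      _ < n+1 := by omega
  have hne : (Sᶜ : Finset (Fin (n+1))).Nonempty := by
    rw [← Finset.card_pos, Finset.card_compl, Fintype.card_fin]
    omega
  obtain ⟨c, hc⟩ := hne
  rw [Finset.mem_compl] at hc
  refine ⟨c, fun j hj => hc ?_, fun i hi => hc ?_⟩
  · exact Finset.mem_union_left _ (Finset.mem_image.mpr ⟨j, Finset.mem_univ _, hj⟩)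
  · refine Finset.mem_union_right _ (Finset.mem_image.mpr ⟨i, Finset.mem_univ _, ?_⟩)
    rw [hi]; exact σ.symm_apply_apply c

lemma descent (M : BMat) (π : Perm') (hsub : BMat.Sub M (permMat π))
    (hlt : M.m + M.n < π.1) :
    ∃ τ : Perm', PPat τ π ∧ τ.1 < π.1 ∧ BMat.Sub M (permMat τ) := by
  obtain ⟨n', σ⟩ := π
  obtain ⟨f, g, hf, hg, hent⟩ := hsub
  match n', σ, f, g, hf, hg, hent, hlt with
  | 0, σ, f, g, hf, hg, hent, hlt => exact absurd hlt (Nat.not_lt_zero _)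
  | n+1, σ, f, g, hf, hg, hent, hlt =>
    obtain ⟨c, hcg, hcf⟩ := exists_free M σ f g hlt
    exact ⟨⟨n, delPt σ c⟩, delPt_ppat σ c, Nat.lt_succ_self n,
      delPt_sub M σ c f g hf hg hent hcg hcf⟩

lemma finite_le_perm (N : ℕ) : {π : Perm' | π.1 ≤ N}.Finite := by
  have hsub : {π : Perm' | π.1 ≤ N} ⊆
      ⋃ n ∈ Finset.range (N+1), Set.range (fun e : Equiv.Perm (Fin n) => (⟨n, e⟩ : Perm')) := by
    rintro ⟨n, e⟩ hn
    simp only [Set.mem_iUnion]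
    exact ⟨n, by simpa using Nat.lt_succ_of_le hn, e, rfl⟩
  exact (Set.Finite.biUnion (Finset.finite_toSet _) (fun n _ => Set.finite_range _)).subset hsub

theorem stmt_11 (C : Set Perm') (hC : ∀ σ ∈ C, ∀ π, PPat π σ → π ∈ C)
    (Ms : Set BMat) (hfin : Ms.Finite) (hq : ∀ M ∈ Ms, QuasiPerm M)
    (h : C = AvS Ms) : (pBasis C).Finite := by
  classical
  set N := hfin.toFinset.sup (fun M => M.m + M.n) with hN
  apply (finite_le_perm N).subset
  rintro π ⟨hπ, hmin⟩
  by_contra hgt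
  simp only [Set.mem_setOf_eq, not_le] at hgt
  have hπ' : π ∉ AvS Ms := by rw [← h]; exact hπ
  simp only [AvS, Set.mem_setOf_eq, not_forall] at hπ'
  obtain ⟨M, hM, hsub⟩ := hπ'
  rw [not_not] at hsub
  have hle : M.m + M.n ≤ N := Finset.le_sup (f := fun M => M.m + M.n) (hfin.mem_toFinset.mpr hM)
  obtain ⟨τ, hpp, hlt', hsub'⟩ := descent M π hsub (lt_of_le_of_lt hle hgt)
  have hτ : τ ∉ C := by
    rw [h]
    intro hτ
    exact hτ M hM hsub'
  have heq := hmin τ hτ hpp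
  rw [heq] at hlt'
  exact lt_irrefl _ hlt'
end

section
/- Let τ be a permutation of size k, and let M_{τ,top} be the (k+1)×k quasi-permutation matrix obtained by adding a row of 0 entries above the permutation matrix M_τ (i.e., as new top row). Then for every permutation σ of size n ≥ 1: σ avoids M_{τ,top} (no occurrence of M_{τ,top} as a submatrix of M_σ) if and only if the permutation σ' of size n−1 obtained from σ by deleting the entry with maximal value avoids τ as a pattern. Hence the permutations of Av_S(M_{τ,top}) are exactly the permutations avoiding τ to which a maximal element has been added. -/
/-- The matrix `M_{τ,top}`: the permutation matrix of `τ` with an all-zero row added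
on top (rows are indexed bottom-to-top, so the new top row is row `k`). -/
def Mtop {k : ℕ} (τ : Equiv.Perm (Fin k)) : BMat :=
  ⟨k + 1, k, fun i j =>
    if h : (i : ℕ) < k then decide ((⟨(i : ℕ), h⟩ : Fin k) = τ j) else false⟩

lemma Mtop_entry {k : ℕ} (τ : Equiv.Perm (Fin k)) (i : Fin (k+1)) (j : Fin k) :
    (Mtop τ).entry i j =
      if h : (i : ℕ) < k then decide ((⟨(i : ℕ), h⟩ : Fin k) = τ j) else false := rfl

lemma permMat_entry (σ : Perm') (i j : Fin σ.1) :
    (permMat σ).entry i j = decide (i = σ.2 j) := rfl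

theorem stmt_13 {k n : ℕ} (τ : Equiv.Perm (Fin k)) (hn : 1 ≤ n)
    (σ : Equiv.Perm (Fin n)) (σ' : Equiv.Perm (Fin (n - 1)))
    (hdel : ∃ f : Fin (n - 1) → Fin n, StrictMono f ∧
      (∀ a, (σ (f a) : ℕ) ≠ n - 1) ∧
      ∀ a b, σ' a < σ' b ↔ σ (f a) < σ (f b)) :
    ¬ BMat.Sub (Mtop τ) (permMat ⟨n, σ⟩) ↔ ¬ PPat ⟨k, τ⟩ ⟨n - 1, σ'⟩ := by
  obtain ⟨f, hf, hfne, hiso⟩ := hdel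
  have htoppos : n - 1 < n := by omega
  set top : Fin n := ⟨n - 1, htoppos⟩ with htopdef
  have hrange : ∀ x : Fin n, (σ x : ℕ) ≠ n - 1 → ∃ a, f a = x := by
    intro x hx
    by_contra hc
    push_neg at hc
    have hj0 : ∀ a, f a ≠ σ.symm top := by
      intro a h
      apply hfne a
      rw [h]
      simp [htopdef]
    have hxne : x ≠ σ.symm top := by
      intro h; apply hx; rw [h]; simp [htopdef]
    have hcard : (Finset.univ.image f).card = n - 1 := by
      rw [Finset.card_image_of_injective _ hf.injective, Finset.card_univ, Fintype.card_fin]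
    have h1 : x ∉ Finset.univ.image f := by
      simp only [Finset.mem_image]; rintro ⟨a, -, ha⟩; exact hc a ha
    have h2 : σ.symm top ∉ insert x (Finset.univ.image f) := by
      simp only [Finset.mem_insert, Finset.mem_image]
      rintro (h | ⟨a, -, ha⟩)
      · exact hxne h.symm
      · exact hj0 a ha
    have hle := Finset.card_le_card
      (Finset.subset_univ (insert (σ.symm top) (insert x (Finset.univ.image f))))
    rw [Finset.card_insert_of_notMem h2, Finset.card_insert_of_notMem h1, hcard,
      Finset.card_univ, Fintype.card_fin] at hle
    omega
  rw [not_iff_not]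
  constructor
  · rintro ⟨F, G, hF, hG, hent⟩
    have hkey : ∀ (i : Fin k) (j : Fin k), (i = τ j) ↔ F i.castSucc = σ (G j) := by
      intro i j
      have h := hent i.castSucc j
      erw [Mtop_entry, permMat_entry, dif_pos (show ((i.castSucc : Fin (k+1)) : ℕ) < k from i.isLt),
        decide_eq_decide] at h
      exact h
    have hval : ∀ j, F (τ j).castSucc = σ (G j) := fun j => (hkey (τ j) j).mp rfl
    have hne : ∀ j, (σ (G j) : ℕ) ≠ n - 1 := by
      intro j h
      have h1 : F (τ j).castSucc < F (Fin.last k) := hF (Fin.castSucc_lt_last _)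
      erw [hval j, Fin.lt_def] at h1
      have h2 : (F (Fin.last k) : ℕ) < n := (F (Fin.last k)).isLt
      have h3 := hent (Fin.last k) j
      erw [Mtop_entry, permMat_entry, dif_neg (show ¬ ((Fin.last k : ℕ) < k) from lt_irrefl k)] at h3
      have h4 : F (Fin.last k) ≠ σ (G j) := by
        intro he
        simp [he] at h3
      -- σ (G j) < F last ≤ n-1, so value ≠ n-1
      have : (σ (G j) : ℕ) < n - 1 := by omega
      omega
    choose g hgf using fun j => hrange (G j) (hne j)
    refine ⟨g, ?_, ?_⟩
    · intro a b hab
      have hlt : f (g a) < f (g b) := by erw [hgf, hgf]; exact hG hab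
      exact hf.lt_iff_lt.mp hlt
    · intro a b
      show τ a < τ b ↔ σ' (g a) < σ' (g b)
      erw [hiso, hgf, hgf, ← hval a, ← hval b, hF.lt_iff_lt, Fin.castSucc_lt_castSucc_iff]
  · rintro ⟨g, hg, hgp⟩
    have hGmono : StrictMono (fun j => f (g j)) := hf.comp hg
    have hkey : ∀ a b, τ a < τ b ↔ σ (f (g a)) < σ (f (g b)) := by
      intro a b
      have := hgp a b
      rw [this]
      exact hiso (g a) (g b)
    refine ⟨fun i => if h : (i : ℕ) < k then σ (f (g (τ.symm ⟨(i : ℕ), h⟩))) else top,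
      fun j => f (g j), ?_, hGmono, ?_⟩
    · intro i i' hii
      have hii' : (i : ℕ) < (i' : ℕ) := hii
      dsimp only
      rcases Nat.lt_or_ge (i' : ℕ) k with h' | h'
      · have h : (i : ℕ) < k := lt_trans hii' h'
        erw [dif_pos h, dif_pos h']
        erw [← hkey]
        simp only [Equiv.apply_symm_apply]
        exact hii'
      · have h'' : ¬ ((i' : ℕ) < k) := not_lt.mpr h'
        erw [dif_neg h'']
        rcases Nat.lt_or_ge (i : ℕ) k with h | h
        · erw [dif_pos h]
          have hne1 := hfne (g (τ.symm ⟨(i : ℕ), h⟩))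
          have hlt := (σ (f (g (τ.symm ⟨(i : ℕ), h⟩)))).isLt
          erw [Fin.lt_def]
          show (σ (f (g (τ.symm ⟨(i : ℕ), h⟩))) : ℕ) < n - 1
          omega
        · exfalso
          have h5 : (i' : ℕ) < k + 1 := i'.isLt
          omega
    · intro i j
      erw [Mtop_entry, permMat_entry]
      dsimp only
      rcases Nat.lt_or_ge (i : ℕ) k with h | h
      · simp only [dif_pos h, decide_eq_decide]
        erw [dif_pos h]
        have hinj : Function.Injective (fun j => σ (f (g j))) :=
          σ.injective.comp (hf.injective.comp hg.injective)
        constructor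
        · intro h'
          erw [h', Equiv.symm_apply_apply]
        · intro h'
          have h'' : τ.symm ⟨(i : ℕ), h⟩ = j := hinj h'
          rw [← h'', Equiv.apply_symm_apply]
      · simp only [dif_neg (not_lt.mpr h)]
        symm
        rw [decide_eq_false_iff_not]
        erw [dif_neg (not_lt.mpr h)]
        intro h'
        exact hfne (g j) (by rw [← h'])
end

section
/- Let C be a permutation class whose p-basis is B, let c_n denote the number of permutations of size n in C, and let 𝓜 = {M_{τ,top} : τ ∈ B}, where M_{τ,top} is obtained from the permutation matrix of τ by adding a row of 0 entries on top. Then for every n ≥ 1, the number of permutations of size n in the permutation class Av_S(𝓜) equals n · c_{n−1}. -/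
namespace Stmt14Aux

variable {m : ℕ}

/-- The position of the maximum value of `σ`. -/
def delP (σ : Equiv.Perm (Fin (m+1))) : Fin (m+1) := σ⁻¹ (Fin.last m)

lemma apply_delP (σ : Equiv.Perm (Fin (m+1))) : σ (delP σ) = Fin.last m :=
  Equiv.apply_symm_apply σ _

/-- The option-level equivalence used to delete the maximum. -/
def optE (σ : Equiv.Perm (Fin (m+1))) : Option (Fin m) ≃ Option (Fin m) :=
  (finSuccEquiv' (delP σ)).symm.trans (σ.trans (finSuccEquiv' (Fin.last m)))

/-- Delete the maximum value from `σ`. -/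
def del (σ : Equiv.Perm (Fin (m+1))) : Equiv.Perm (Fin m) := Equiv.removeNone (optE σ)

lemma sigma_succAbove_ne_last (σ : Equiv.Perm (Fin (m+1))) (j : Fin m) :
    σ ((delP σ).succAbove j) ≠ Fin.last m := by
  intro h
  exact (delP σ).succAbove_ne j (σ.injective (h.trans (apply_delP σ).symm))

lemma optE_some (σ : Equiv.Perm (Fin (m+1))) (j : Fin m) :
    optE σ (some j) = some ((σ ((delP σ).succAbove j)).castPred (sigma_succAbove_ne_last σ j)) := by
  have h1 : optE σ (some j) = finSuccEquiv' (Fin.last m) (σ ((delP σ).succAbove j)) := by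
    simp [optE, finSuccEquiv'_symm_some]
  rw [h1]
  conv_lhs => rw [← Fin.castSucc_castPred _ (sigma_succAbove_ne_last σ j)]
  rw [finSuccEquiv'_last_apply_castSucc]

lemma del_castSucc (σ : Equiv.Perm (Fin (m+1))) (j : Fin m) :
    Fin.castSucc (del σ j) = σ ((delP σ).succAbove j) := by
  have := Equiv.removeNone_some (optE σ) ⟨_, optE_some σ j⟩
  rw [optE_some σ j] at this
  have h2 : del σ j = (σ ((delP σ).succAbove j)).castPred (sigma_succAbove_ne_last σ j) :=
    Option.some_injective _ this
  rw [h2, Fin.castSucc_castPred]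

/-- Insert a new maximum at position `p`. -/
def ins (p : Fin (m+1)) (τ : Equiv.Perm (Fin m)) : Equiv.Perm (Fin (m+1)) :=
  (finSuccEquiv' p).trans ((Equiv.optionCongr τ).trans (finSuccEquiv' (Fin.last m)).symm)

lemma ins_apply_self (p : Fin (m+1)) (τ : Equiv.Perm (Fin m)) : ins p τ p = Fin.last m := by
  simp [ins, finSuccEquiv'_at, finSuccEquiv'_symm_none]

lemma ins_succAbove (p : Fin (m+1)) (τ : Equiv.Perm (Fin m)) (j : Fin m) :
    ins p τ (p.succAbove j) = Fin.castSucc (τ j) := by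
  simp [ins, finSuccEquiv'_succAbove, finSuccEquiv'_symm_some, Fin.succAbove_last]

lemma delP_ins (p : Fin (m+1)) (τ : Equiv.Perm (Fin m)) : delP (ins p τ) = p := by
  apply (ins p τ).injective
  rw [apply_delP, ins_apply_self]

lemma del_ins (p : Fin (m+1)) (τ : Equiv.Perm (Fin m)) : del (ins p τ) = τ := by
  refine Equiv.ext fun j => Fin.castSucc_injective _ ?_
  rw [del_castSucc, delP_ins, ins_succAbove]

lemma ins_del (σ : Equiv.Perm (Fin (m+1))) : ins (delP σ) (del σ) = σ := by
  refine Equiv.ext fun x => ?_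
  rcases eq_or_ne x (delP σ) with rfl | hx
  · rw [ins_apply_self, apply_delP]
  · obtain ⟨j, rfl⟩ := Fin.exists_succAbove_eq hx
    rw [ins_succAbove, del_castSucc]

/-- Decomposition of the subtype of permutations whose deletion lies in `S`. -/
def subEquiv (S : Set (Equiv.Perm (Fin m))) :
    {σ : Equiv.Perm (Fin (m+1)) // del σ ∈ S} ≃ Fin (m+1) × {τ : Equiv.Perm (Fin m) // τ ∈ S} where
  toFun σ := (delP σ.1, ⟨del σ.1, σ.2⟩)
  invFun x := ⟨ins x.1 x.2.1, by rw [del_ins]; exact x.2.2⟩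
  left_inv σ := Subtype.ext (ins_del σ.1)
  right_inv x := Prod.ext (delP_ins _ _) (Subtype.ext (del_ins _ _))

/-- The key equivalence: `M_{τ,top}` occurs in `M_σ` iff `τ` occurs as a pattern of `σ`
with the maximum deleted. -/
lemma sub_iff {k : ℕ} (τ : Equiv.Perm (Fin k)) (σ : Equiv.Perm (Fin (m+1))) :
    BMat.Sub (Mtop τ) (permMat ⟨m+1, σ⟩) ↔ PPat ⟨k, τ⟩ ⟨m, del σ⟩ := by
  constructor
  · rintro ⟨F, G, hF, hG, hent⟩
    have key : ∀ (i : Fin (k+1)) (h : (i:ℕ) < k) (j : Fin k),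
        ((⟨(i:ℕ), h⟩ : Fin k) = τ j) ↔ F i = σ (G j) := by
      intro i h j
      have := hent i j
      simp only [Mtop, permMat, dif_pos h] at this
      exact decide_eq_decide.mp this
    have hF0 : ∀ j : Fin k, F (Fin.castSucc (τ j)) = σ (G j) := by
      intro j
      exact (key (Fin.castSucc (τ j)) (by simp) j).mp (by simp)
    have hlast : ∀ j, σ (G j) ≠ Fin.last m := by
      intro j
      have h1 : σ (G j) < F (Fin.last k) := by
        rw [← hF0 j]; exact hF (Fin.castSucc_lt_last (τ j))
      exact Fin.ne_last_of_lt (lt_of_lt_of_le h1 (Fin.le_last _))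
    have hne : ∀ j, G j ≠ delP σ := by
      intro j hj
      exact hlast j (by rw [hj]; exact Equiv.apply_symm_apply σ _)
    choose g hg using fun j => Fin.exists_succAbove_eq (hne j)
    refine ⟨g, ?_, ?_⟩
    · intro a b hab
      have : (delP σ).succAbove (g a) < (delP σ).succAbove (g b) := by
        rw [hg a, hg b]; exact hG hab
      exact (Fin.succAbove_lt_succAbove_iff).mp this
    · intro a b
      show τ a < τ b ↔ del σ (g a) < del σ (g b)
      rw [← Fin.castSucc_lt_castSucc_iff (a := del σ (g a)), del_castSucc, del_castSucc, hg a, hg b,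
        ← hF0, ← hF0]
      exact Fin.castSucc_lt_castSucc_iff.symm.trans hF.lt_iff_lt.symm
  · rintro ⟨f, hf, hpat⟩
    simp only at hpat
    refine ⟨fun i => if h : (i:ℕ) < k then Fin.castSucc (del σ (f (τ⁻¹ ⟨(i:ℕ), h⟩)))
        else Fin.last m,
      fun j => (delP σ).succAbove (f j), ?_, ?_, ?_⟩
    · intro i i' hii
      dsimp only [permMat]
      rcases Nat.lt_or_ge (i:ℕ) k with h | h
      · rcases Nat.lt_or_ge (i':ℕ) k with h' | h'
        · rw [dif_pos h, dif_pos h']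
          refine Fin.castSucc_lt_castSucc_iff.mpr ?_
          have : τ (τ⁻¹ ⟨(i:ℕ), h⟩) < τ (τ⁻¹ ⟨(i':ℕ), h'⟩) := by
            simp only [Equiv.Perm.inv_def, Equiv.apply_symm_apply]
            exact hii
          exact (hpat _ _).mp this
        · rw [dif_pos h, dif_neg (not_lt.mpr h')]
          exact Fin.castSucc_lt_last _
      · exact absurd (lt_of_le_of_lt h (lt_of_lt_of_le hii (Nat.lt_succ_iff.mp i'.isLt)))
          (lt_irrefl _)
    · exact fun a b hab => (Fin.strictMono_succAbove _) (hf hab)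
    · intro i j
      simp only [Mtop, permMat]
      rcases Nat.lt_or_ge (i:ℕ) k with h | h
      · rw [dif_pos h, dif_pos h]
        apply decide_eq_decide.mpr
        rw [del_castSucc]
        constructor
        · intro he
          have h2 : τ⁻¹ (⟨(i:ℕ), h⟩ : Fin k) = j := by
            rw [he]; exact Equiv.symm_apply_apply τ j
          rw [h2]
        · intro he
          have h2 : τ⁻¹ (⟨(i:ℕ), h⟩ : Fin k) = j :=
            hf.injective (Fin.succAbove_right_injective (σ.injective he))
          rw [← h2, Equiv.Perm.inv_def, Equiv.apply_symm_apply]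
      · rw [dif_neg (not_lt.mpr h), dif_neg (not_lt.mpr h)]
        symm
        rw [decide_eq_false_iff_not]
        intro he
        exact sigma_succAbove_ne_last σ (f j) he.symm

end Stmt14Aux

theorem stmt_14 (C : Set Perm') (B : Set Perm') (hanti : IsAntichain PPat B)
    (hB : C = {σ : Perm' | ∀ b ∈ B, ¬ PPat b σ}) (n : ℕ) (hn : 1 ≤ n) :
    Nat.card {σ : Equiv.Perm (Fin n) //
        (⟨n, σ⟩ : Perm') ∈ AvS {M : BMat | ∃ b ∈ B, M = Mtop b.2}} =
      n * Nat.card {σ : Equiv.Perm (Fin (n - 1)) // (⟨n - 1, σ⟩ : Perm') ∈ C} := by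
  obtain ⟨m, rfl⟩ : ∃ m, n = m + 1 := ⟨n - 1, (Nat.succ_pred_eq_of_pos hn).symm⟩
  have hmem : ∀ σ : Equiv.Perm (Fin (m+1)),
      ((⟨m+1, σ⟩ : Perm') ∈ AvS {M : BMat | ∃ b ∈ B, M = Mtop b.2}) ↔
        Stmt14Aux.del σ ∈ {τ : Equiv.Perm (Fin m) | (⟨m, τ⟩ : Perm') ∈ C} := by
    intro σ
    rw [Set.mem_setOf_eq, hB]
    constructor
    · intro h b hb hpat
      exact h (Mtop b.2) ⟨b, hb, rfl⟩ ((Stmt14Aux.sub_iff b.2 σ).2 hpat)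
    · intro h M hM hsub
      obtain ⟨b, hb, rfl⟩ := hM
      exact h b hb ((Stmt14Aux.sub_iff b.2 σ).1 hsub)
  have e : {σ : Equiv.Perm (Fin (m+1)) //
        (⟨m+1, σ⟩ : Perm') ∈ AvS {M : BMat | ∃ b ∈ B, M = Mtop b.2}}
      ≃ Fin (m+1) × {τ : Equiv.Perm (Fin m) // (⟨m, τ⟩ : Perm') ∈ C} :=
    (Equiv.subtypeEquivRight hmem).trans (Stmt14Aux.subEquiv _)
  rw [Nat.card_congr e, Nat.card_prod, Nat.card_eq_fintype_card (α := Fin (m+1)),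
    Fintype.card_fin]
  rfl
end

section
/- (Ryser) A binary matrix M is uniquely determined by its horizontal and vertical projections (i.e., M is the only binary matrix of the same dimensions having the same vector of row sums and the same vector of column sums) if and only if M contains neither S₁ nor S₂ as a submatrix, where S₁ is the 2×2 matrix with 1s on the main diagonal and 0s elsewhere and S₂ is the 2×2 matrix with 1s on the antidiagonal and 0s elsewhere. Equivalently: M is uniquely determined by its projections iff there are no row indices i < i' and column indices j < j' such that M(i,j) = M(i',j') = 1 and M(i,j') = M(i',j) = 0, or M(i,j') = M(i',j) = 1 and M(i,j) = M(i',j') = 0. -/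
/-- `S₁`: the 2×2 matrix with 1s on the main diagonal. -/
def S1 : BMat := ⟨2, 2, fun i j => decide ((i : ℕ) = (j : ℕ))⟩

/-- `S₂`: the 2×2 matrix with 1s on the antidiagonal. -/
def S2 : BMat := ⟨2, 2, fun i j => decide ((i : ℕ) + (j : ℕ) = 1)⟩

namespace RyserAux

/-- Rows form a chain under inclusion. -/
def RowChain {m n : ℕ} (M : Fin m → Fin n → Bool) : Prop :=
  ∀ i i', (∀ j, M i j = true → M i' j = true) ∨ (∀ j, M i' j = true → M i j = true)

lemma strictMono_pair {k : ℕ} {a b : Fin k} (h : a < b) : StrictMono ![a, b] := by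
  intro x y hxy
  fin_cases x <;> fin_cases y <;>
    simp_all [Matrix.cons_val_zero, Matrix.cons_val_one]

section Chain

variable {m n : ℕ} (M : Fin m → Fin n → Bool)

/-- row sums -/
def r (i : Fin m) : ℕ := ∑ j, if M i j then 1 else 0
/-- column sums -/
def c (j : Fin n) : ℕ := ∑ i, if M i j then 1 else 0
/-- number of rows with row sum at least that of row `i` -/
def u (i : Fin m) : ℕ := (Finset.univ.filter (fun i' => r M i ≤ r M i')).card

variable {M}

lemma r_mono {i i' : Fin m} (h : ∀ j, M i j = true → M i' j = true) : r M i ≤ r M i' := by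
  apply Finset.sum_le_sum
  intro j _
  by_cases hj : M i j
  · simp [hj, h j hj]
  · simp [hj]

/-- In a chain, an entry is 1 iff the column sum is at least `u i`. -/
lemma entry_iff_of_chain (hM : RowChain M) (i : Fin m) (j : Fin n) :
    M i j = true ↔ u M i ≤ c M j := by
  constructor
  · intro h1
    have hsub : (Finset.univ.filter (fun i' => r M i ≤ r M i')) ⊆
        (Finset.univ.filter (fun i' => M i' j = true)) := by
      intro i' hi'
      simp only [Finset.mem_filter, Finset.mem_univ, true_and] at hi' ⊢
      rcases hM i i' with h | h
      · exact h j h1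
      · -- rows i' ⊆ i but r i ≤ r i' forces equality
        have hle : ∀ j' ∈ (Finset.univ : Finset (Fin n)),
            (if M i' j' then (1:ℕ) else 0) ≤ (if M i j' then 1 else 0) := by
          intro j' _
          by_cases hj : M i' j'
          · simp [hj, h j' hj]
          · simp [hj]
        have hre : r M i' = r M i := le_antisymm (r_mono h) hi'
        have := (Finset.sum_eq_sum_iff_of_le hle).mp hre j (Finset.mem_univ j)
        simp only [h1, if_true] at this
        by_contra hc
        simp [hc] at this
    have : u M i ≤ (Finset.univ.filter (fun i' => M i' j = true)).card :=
      Finset.card_le_card hsub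
    calc u M i ≤ _ := this
      _ = c M j := by simp [c, Finset.sum_boole]
  · intro h1
    by_contra h2
    have hb : M i j = false := by simpa using h2
    have hsub : (Finset.univ.filter (fun i' => M i' j = true)) ⊆
        (Finset.univ.filter (fun i' => r M i ≤ r M i')) := by
      intro i' hi'
      simp only [Finset.mem_filter, Finset.mem_univ, true_and] at hi' ⊢
      rcases hM i i' with h | h
      · exact r_mono h
      · exact absurd (h j hi') (by simp [hb])
    have hss : (Finset.univ.filter (fun i' => M i' j = true)) ⊂
        (Finset.univ.filter (fun i' => r M i ≤ r M i')) := by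
      refine (Finset.ssubset_iff_of_subset hsub).mpr ⟨i, ?_, ?_⟩
      · simp
      · simp [hb]
    have : c M j < u M i := by
      have := Finset.card_lt_card hss
      simpa [c, u, Finset.sum_boole] using this
    omega

end Chain

end RyserAux

namespace RyserAux

variable {m n : ℕ}

/-- Two chain matrices with the same margins are equal. -/
lemma chain_determined {M N : Fin m → Fin n → Bool}
    (hM : RowChain M) (hN : RowChain N)
    (hr : ∀ i, r N i = r M i) (hc : ∀ j, c N j = c M j) : N = M := by
  funext i j
  have hu : u N i = u M i := by
    simp only [u]
    congr 1
    apply Finset.filter_congr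
    intro i' _
    simp [hr]
  have h1 := entry_iff_of_chain hM i j
  have h2 := entry_iff_of_chain hN i j
  rw [hu, hc] at h2
  by_cases h : u M i ≤ c M j
  · rw [h2.mpr h, h1.mpr h]
  · have e1 : M i j = false := by
      by_contra hx
      exact h (h1.mp (by simpa using hx))
    have e2 : N i j = false := by
      by_contra hx
      exact h (h2.mp (by simpa using hx))
    rw [e1, e2]

/-- If `M`'s rows form a chain and `N` has the same margins, then `N`'s rows
form a chain too. -/
lemma chain_transfer {M N : Fin m → Fin n → Bool}
    (hM : RowChain M)
    (hr : ∀ i, r N i = r M i) (hc : ∀ j, c N j = c M j) : RowChain N := by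
  classical
  -- inner products of rows
  set tM : Fin m → Fin m → ℕ :=
    fun i i' => ∑ j, (if M i j then 1 else 0) * (if M i' j then 1 else 0) with htM
  set tN : Fin m → Fin m → ℕ :=
    fun i i' => ∑ j, (if N i j then 1 else 0) * (if N i' j then 1 else 0) with htN
  -- total sum identity: ∑_{i,i'} t = ∑_j c_j ^ 2
  have key : ∀ (P : Fin m → Fin n → Bool),
      (∑ i, ∑ i', ∑ j, (if P i j then (1:ℕ) else 0) * (if P i' j then 1 else 0))
        = ∑ j, (c P j) * (c P j) := by
    intro P
    have : ∀ i : Fin m, (∑ i', ∑ j, (if P i j = true then (1:ℕ) else 0) * (if P i' j = true then 1 else 0))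
        = ∑ j, (if P i j then (1:ℕ) else 0) * (c P j) := by
      intro i
      rw [Finset.sum_comm]
      refine Finset.sum_congr rfl fun j _ => ?_
      rw [c, Finset.mul_sum]
    rw [Finset.sum_congr rfl fun i _ => this i, Finset.sum_comm]
    refine Finset.sum_congr rfl fun j _ => ?_
    rw [← Finset.sum_mul, ← c]
  -- pointwise bound tN ≤ min and equality for M
  have hbound : ∀ (P : Fin m → Fin n → Bool) i i',
      (∑ j, (if P i j then (1:ℕ) else 0) * (if P i' j then 1 else 0)) ≤ min (r P i) (r P i') := by
    intro P i i'
    refine le_min ?_ ?_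
    · refine Finset.sum_le_sum fun j _ => ?_
      by_cases h1 : P i j <;> by_cases h2 : P i' j <;> simp [h1, h2]
    · refine Finset.sum_le_sum fun j _ => ?_
      by_cases h1 : P i j <;> by_cases h2 : P i' j <;> simp [h1, h2]
  have hMeq : ∀ i i', tM i i' = min (r M i) (r M i') := by
    intro i i'
    rcases hM i i' with h | h
    · have : tM i i' = r M i := by
        refine Finset.sum_congr rfl fun j _ => ?_
        by_cases h1 : M i j
        · simp [h1, h j h1]
        · simp [h1]
      rw [this, min_eq_left (r_mono h)]
    · have : tM i i' = r M i' := by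
        refine Finset.sum_congr rfl fun j _ => ?_
        by_cases h1 : M i' j
        · simp [h1, h j h1]
        · simp [h1]
      rw [this, min_eq_right (r_mono h)]
  -- total sums agree
  have htot : (∑ i, ∑ i', tN i i') = ∑ i, ∑ i', min (r M i) (r M i') := by
    calc (∑ i, ∑ i', tN i i') = ∑ j, (c N j) * (c N j) := key N
      _ = ∑ j, (c M j) * (c M j) := by simp [hc]
      _ = ∑ i, ∑ i', tM i i' := (key M).symm
      _ = ∑ i, ∑ i', min (r M i) (r M i') := by
          exact Finset.sum_congr rfl fun i _ => Finset.sum_congr rfl fun i' _ => hMeq i i'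
  -- termwise equality
  have hle1 : ∀ i ∈ (Finset.univ : Finset (Fin m)),
      (∑ i', tN i i') ≤ ∑ i', min (r M i) (r M i') := by
    intro i _
    refine Finset.sum_le_sum fun i' _ => ?_
    calc tN i i' ≤ min (r N i) (r N i') := hbound N i i'
      _ = min (r M i) (r M i') := by rw [hr, hr]
  have hterm : ∀ i i', tN i i' = min (r M i) (r M i') := by
    intro i i'
    have h1 := (Finset.sum_eq_sum_iff_of_le hle1).mp htot i (Finset.mem_univ i)
    have hle2 : ∀ i'' ∈ (Finset.univ : Finset (Fin m)),
        tN i i'' ≤ min (r M i) (r M i'') := by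
      intro i'' _
      calc tN i i'' ≤ min (r N i) (r N i'') := hbound N i i''
        _ = min (r M i) (r M i'') := by rw [hr, hr]
    exact (Finset.sum_eq_sum_iff_of_le hle2).mp h1 i' (Finset.mem_univ i')
  -- conclude chain
  intro i i'
  by_contra hcon
  push_neg at hcon
  obtain ⟨⟨j0, hj0a, hj0b⟩, ⟨j1, hj1a, hj1b⟩⟩ := hcon
  have hlt1 : tN i i' < r N i := by
    refine Finset.sum_lt_sum (fun j _ => ?_) ⟨j0, Finset.mem_univ j0, ?_⟩
    · by_cases h1 : N i j <;> by_cases h2 : N i' j <;> simp [h1, h2]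
    · simp [hj0a, hj0b]
  have hlt2 : tN i i' < r N i' := by
    refine Finset.sum_lt_sum (fun j _ => ?_) ⟨j1, Finset.mem_univ j1, ?_⟩
    · by_cases h1 : N i j <;> by_cases h2 : N i' j <;> simp [h1, h2]
    · simp [hj1a, hj1b]
  have := hterm i i'
  rw [← hr i, ← hr i'] at this
  rcases min_cases (r N i) (r N i') with ⟨hmin, _⟩ | ⟨hmin, _⟩ <;> omega

end RyserAux

namespace RyserAux

variable {m n : ℕ}

/-- Flipping a 2×2 switch preserves margins and changes the matrix. -/
lemma flip (M : Fin m → Fin n → Bool) (a b : Fin m) (p q : Fin n)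
    (hab : a ≠ b) (h1 : M a q = M b p) (h2 : M a p = M b q) (h3 : M a p ≠ M a q) :
    ∃ N : Fin m → Fin n → Bool,
      (∀ i, r N i = r M i) ∧ (∀ j, c N j = c M j) ∧ N ≠ M := by
  classical
  refine ⟨fun i j => if i = a ∨ i = b then M i (Equiv.swap p q j) else M i j, ?_, ?_, ?_⟩
  · intro i
    by_cases hi : i = a ∨ i = b
    · simp only [r, hi, if_true]
      exact Fintype.sum_equiv (Equiv.swap p q)
        (fun j => if M i (Equiv.swap p q j) then 1 else 0)
        (fun j => if M i j then 1 else 0) (fun j => rfl)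
    · simp only [r, hi, if_false]
  · intro j
    by_cases hj : j = p ∨ j = q
    · have hcol : ∀ i, (if i = a ∨ i = b then M i (Equiv.swap p q j) else M i j)
          = M (Equiv.swap a b i) j := by
        intro i
        by_cases hia : i = a
        · subst hia
          rcases hj with hj | hj <;> subst hj <;>
            simp [Equiv.swap_apply_left, Equiv.swap_apply_right, h1, h2]
        · by_cases hib : i = b
          · subst hib
            rcases hj with hj | hj <;> subst hj <;>
              simp [Equiv.swap_apply_left, Equiv.swap_apply_right, hab,
                Equiv.swap_apply_of_ne_of_ne, ← h1, ← h2]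
          · simp [hia, hib, Equiv.swap_apply_of_ne_of_ne]
      simp only [c, hcol]
      exact Fintype.sum_equiv (Equiv.swap a b)
        (fun i => if M (Equiv.swap a b i) j then 1 else 0)
        (fun i => if M i j then 1 else 0) (fun i => rfl)
    · push_neg at hj
      have : Equiv.swap p q j = j := Equiv.swap_apply_of_ne_of_ne hj.1 hj.2
      simp only [c, this, ite_self]
  · intro hNM
    have := congrFun (congrFun hNM a) p
    simp [Equiv.swap_apply_left] at this
    exact h3 (h2 ▸ this ▸ h2.symm ▸ rfl)

end RyserAux

namespace RyserAux

lemma nosub_of_chain (M : BMat) (hM : RowChain M.entry) :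
    ¬ BMat.Sub S1 M ∧ ¬ BMat.Sub S2 M := by
  constructor
  · rintro ⟨f, g, hf, hg, hE⟩
    have e00 := (hE ⟨0, by decide⟩ ⟨0, by decide⟩).symm
    have e01 := (hE ⟨0, by decide⟩ ⟨1, by decide⟩).symm
    have e10 := (hE ⟨1, by decide⟩ ⟨0, by decide⟩).symm
    have e11 := (hE ⟨1, by decide⟩ ⟨1, by decide⟩).symm
    simp only [S1] at e00 e01 e10 e11
    norm_num at e00 e01 e10 e11
    rcases hM (f ⟨0, by decide⟩) (f ⟨1, by decide⟩) with h | h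
    · exact Bool.noConfusion (e10.symm.trans (h (g ⟨0, by decide⟩) e00))
    · exact Bool.noConfusion (e01.symm.trans (h (g ⟨1, by decide⟩) e11))
  · rintro ⟨f, g, hf, hg, hE⟩
    have e00 := (hE ⟨0, by decide⟩ ⟨0, by decide⟩).symm
    have e01 := (hE ⟨0, by decide⟩ ⟨1, by decide⟩).symm
    have e10 := (hE ⟨1, by decide⟩ ⟨0, by decide⟩).symm
    have e11 := (hE ⟨1, by decide⟩ ⟨1, by decide⟩).symm
    simp only [S2] at e00 e01 e10 e11
    norm_num at e00 e01 e10 e11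
    rcases hM (f ⟨0, by decide⟩) (f ⟨1, by decide⟩) with h | h
    · exact Bool.noConfusion (e11.symm.trans (h (g ⟨1, by decide⟩) e01))
    · exact Bool.noConfusion (e00.symm.trans (h (g ⟨0, by decide⟩) e10))

lemma chain_of_nosub (M : BMat) (h1 : ¬ BMat.Sub S1 M) (h2 : ¬ BMat.Sub S2 M) :
    RowChain M.entry := by
  intro i i'
  by_contra hcon
  push_neg at hcon
  obtain ⟨⟨j0, ha0, hb0⟩, ⟨j1, ha1, hb1⟩⟩ := hcon
  have hb0' : M.entry i' j0 = false := by simpa using hb0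
  have hb1' : M.entry i j1 = false := by simpa using hb1
  have hii : i ≠ i' := by rintro rfl; rw [ha0] at hb0'; exact Bool.noConfusion hb0'
  have hjj : j0 ≠ j1 := by rintro rfl; rw [ha0] at hb1'; exact Bool.noConfusion hb1'
  rcases hii.lt_or_gt with hi | hi <;> rcases hjj.lt_or_gt with hj | hj
  · exact h1 ⟨![i, i'], ![j0, j1], strictMono_pair hi, strictMono_pair hj,
      by intro x y; fin_cases x <;> fin_cases y <;>
        simp [S1, ha0, ha1, hb0', hb1']⟩
  · exact h2 ⟨![i, i'], ![j1, j0], strictMono_pair hi, strictMono_pair hj,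
      by intro x y; fin_cases x <;> fin_cases y <;>
        simp [S2, ha0, ha1, hb0', hb1']⟩
  · exact h2 ⟨![i', i], ![j0, j1], strictMono_pair hi, strictMono_pair hj,
      by intro x y; fin_cases x <;> fin_cases y <;>
        simp [S2, ha0, ha1, hb0', hb1']⟩
  · exact h1 ⟨![i', i], ![j1, j0], strictMono_pair hi, strictMono_pair hj,
      by intro x y; fin_cases x <;> fin_cases y <;>
        simp [S1, ha0, ha1, hb0', hb1']⟩

end RyserAux

theorem stmt_16 (M : BMat) :
    (∀ N : Fin M.m → Fin M.n → Bool,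
      (∀ i, (∑ j, if N i j then (1 : ℕ) else 0) =
        ∑ j, if M.entry i j then (1 : ℕ) else 0) →
      (∀ j, (∑ i, if N i j then (1 : ℕ) else 0) =
        ∑ i, if M.entry i j then (1 : ℕ) else 0) →
      N = M.entry) ↔
    (¬ BMat.Sub S1 M ∧ ¬ BMat.Sub S2 M) := by
  constructor
  · intro huniq
    by_contra hcon
    have hnc : ¬ RyserAux.RowChain M.entry := fun hch =>
      hcon (RyserAux.nosub_of_chain M hch)
    -- extract an incomparable pair and build a switch, then flip it
    unfold RyserAux.RowChain at hnc
    push_neg at hnc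
    obtain ⟨i, i', ⟨j0, ha0, hb0⟩, ⟨j1, ha1, hb1⟩⟩ := hnc
    have hb0' : M.entry i' j0 = false := by simpa using hb0
    have hb1' : M.entry i j1 = false := by simpa using hb1
    have hii : i ≠ i' := by rintro rfl; rw [ha0] at hb0'; exact Bool.noConfusion hb0'
    obtain ⟨N, hrN, hcN, hNM⟩ := RyserAux.flip M.entry i i' j0 j1 hii
      (by rw [hb1', hb0']) (by rw [ha0, ha1]) (by rw [ha0, hb1']; exact Bool.noConfusion)
    exact hNM (huniq N (fun i => hrN i) (fun j => hcN j))
  · rintro ⟨h1, h2⟩ N hr hc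
    have hM : RyserAux.RowChain M.entry := RyserAux.chain_of_nosub M h1 h2
    have hN : RyserAux.RowChain N :=
      RyserAux.chain_transfer hM (fun i => hr i) (fun j => hc j)
    exact RyserAux.chain_determined hM hN (fun i => hr i) (fun j => hc j)
end

section
/- Let c'_n be the number of polyominoes whose matrix is n×n (i.e., whose minimal bounding rectangle is an n×n square) and which avoid both V' = [0 1 0] (the 1×3 row matrix) and H' (the 3×1 column matrix with entries 0, 1, 0) as submatrices. Then for every n ≥ 1, c'_n ≥ ⌊n/2⌋! . -/
/-- `V' = [0 1 0]`. -/
def Vrow : BMat := ⟨1, 3, fun _ j => decide ((j : ℕ) = 1)⟩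

/-- `H'`: the 3×1 column matrix with entries `0, 1, 0`. -/
def Hcol : BMat := ⟨3, 1, fun i _ => decide ((i : ℕ) = 1)⟩

section Aux

/-- The hole positions determined by a permutation. -/
def isHole {k : ℕ} (σ : Equiv.Perm (Fin k)) (i j : ℕ) : Prop :=
  ∃ t : Fin k, i = (t : ℕ) + 1 ∧ j = ((σ t : Fin k) : ℕ) + 1

instance {k : ℕ} (σ : Equiv.Perm (Fin k)) (i j : ℕ) : Decidable (isHole σ i j) := by
  unfold isHole; infer_instance

/-- The full `n × n` square with a hole at `(t+1, σ t + 1)` for each `t`. -/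
def PM (n : ℕ) {k : ℕ} (σ : Equiv.Perm (Fin k)) : BMat :=
  ⟨n, n, fun i j => ! decide (isHole σ (i : ℕ) (j : ℕ))⟩

variable {n k : ℕ} {σ : Equiv.Perm (Fin k)}

lemma PM_entry_true_iff {i j : Fin n} :
    (PM n σ).entry i j = true ↔ ¬ isHole σ (i : ℕ) (j : ℕ) := by
  simp [PM]

lemma PM_entry_false_iff {i j : Fin n} :
    (PM n σ).entry i j = false ↔ isHole σ (i : ℕ) (j : ℕ) := by
  simp [PM]

lemma hole_row_unique {i j j' : ℕ} (h : isHole σ i j) (h' : isHole σ i j') : j = j' := by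
  obtain ⟨t, ht1, ht2⟩ := h
  obtain ⟨t', ht1', ht2'⟩ := h'
  have : t = t' := by
    apply Fin.ext; omega
  subst this; omega

lemma hole_col_unique {i i' j : ℕ} (h : isHole σ i j) (h' : isHole σ i' j) : i = i' := by
  obtain ⟨t, ht1, ht2⟩ := h
  obtain ⟨t', ht1', ht2'⟩ := h'
  have hσ : σ t = σ t' := by apply Fin.ext; omega
  have : t = t' := σ.injective hσ
  subst this; omega

lemma hole_bounds (hk : k + 2 ≤ n ∨ k = 0) {i j : ℕ} (h : isHole σ i j) :
    1 ≤ i ∧ i ≤ n - 2 ∧ 1 ≤ j ∧ j ≤ n - 2 := by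
  obtain ⟨t, ht1, ht2⟩ := h
  have h1 : (t : ℕ) < k := t.isLt
  have h2 : ((σ t : Fin k) : ℕ) < k := (σ t).isLt
  rcases hk with hk | hk
  · omega
  · subst hk; exact absurd h1 (by omega)

/-- The step relation used for connectivity. -/
def PMrel (n : ℕ) {k : ℕ} (σ : Equiv.Perm (Fin k)) (x y : Fin n × Fin n) : Prop :=
  (PM n σ).entry x.1 x.2 = true ∧ (PM n σ).entry y.1 y.2 = true ∧ CellAdj x y

lemma PMrel_symm : Symmetric (PMrel n σ) := by
  rintro x y ⟨h1, h2, h3⟩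
  refine ⟨h2, h1, ?_⟩
  unfold CellAdj at h3 ⊢
  tauto

lemma seg_h (i a : Fin n) (b : ℕ) (hab : (a : ℕ) ≤ b) :
    ∀ (hb : b < n), (∀ c : Fin n, (a : ℕ) ≤ (c : ℕ) → (c : ℕ) ≤ b →
      (PM n σ).entry i c = true) →
    Relation.ReflTransGen (PMrel n σ) (i, a) (i, ⟨b, hb⟩) := by
  induction b, hab using Nat.le_induction with
  | base =>
      intro hb H
      have : (⟨(a : ℕ), hb⟩ : Fin n) = a := by apply Fin.ext; rfl
      rw [this]
  | succ m hm ih =>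
      intro hb H
      refine Relation.ReflTransGen.tail (ih (by omega) (fun c h1 h2 => H c h1 (by omega))) ?_
      refine ⟨H ⟨m, by omega⟩ hm (Nat.le_succ m), H ⟨m + 1, hb⟩ (Nat.le_succ_of_le hm)
        (Nat.le_refl (m + 1)), ?_⟩
      left; exact ⟨rfl, Or.inl rfl⟩

lemma seg_v (j a : Fin n) (b : ℕ) (hab : (a : ℕ) ≤ b) :
    ∀ (hb : b < n), (∀ c : Fin n, (a : ℕ) ≤ (c : ℕ) → (c : ℕ) ≤ b →
      (PM n σ).entry c j = true) →
    Relation.ReflTransGen (PMrel n σ) (a, j) (⟨b, hb⟩, j) := by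
  induction b, hab using Nat.le_induction with
  | base =>
      intro hb H
      have : (⟨(a : ℕ), hb⟩ : Fin n) = a := by apply Fin.ext; rfl
      rw [this]
  | succ m hm ih =>
      intro hb H
      refine Relation.ReflTransGen.tail (ih (by omega) (fun c h1 h2 => H c h1 (by omega))) ?_
      refine ⟨H ⟨m, by omega⟩ hm (Nat.le_succ m), H ⟨m + 1, hb⟩ (Nat.le_succ_of_le hm)
        (Nat.le_refl (m + 1)), ?_⟩
      right; exact ⟨rfl, Or.inl rfl⟩

lemma col0_true (hn : 1 ≤ n) (i : Fin n) : (PM n σ).entry i ⟨0, hn⟩ = true := by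
  apply (PM_entry_true_iff (σ := σ)).mpr
  rintro ⟨t, ht1, ht2⟩
  simp at ht2

lemma row0_true (hn : 1 ≤ n) (j : Fin n) : (PM n σ).entry ⟨0, hn⟩ j = true := by
  apply (PM_entry_true_iff (σ := σ)).mpr
  rintro ⟨t, ht1, ht2⟩
  simp at ht1

lemma coln_true (hn : 1 ≤ n) (hk : k + 2 ≤ n ∨ k = 0) (i j : Fin n)
    (hj : (j : ℕ) = n - 1) : (PM n σ).entry i j = true := by
  rw [PM_entry_true_iff]
  intro h
  have := hole_bounds hk h
  omega

lemma rown_true (hn : 1 ≤ n) (hk : k + 2 ≤ n ∨ k = 0) (i j : Fin n)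
    (hi : (i : ℕ) = n - 1) : (PM n σ).entry i j = true := by
  rw [PM_entry_true_iff]
  intro h
  have := hole_bounds hk h
  omega

lemma to_corner (hn : 1 ≤ n) (hk : k + 2 ≤ n ∨ k = 0) (a : Fin n × Fin n)
    (ha : (PM n σ).entry a.1 a.2 = true) :
    Relation.ReflTransGen (PMrel n σ) a ((⟨0, hn⟩ : Fin n), (⟨0, hn⟩ : Fin n)) := by
  obtain ⟨i, j⟩ := a
  by_cases hL : ∀ c : Fin n, (c : ℕ) ≤ (j : ℕ) → (PM n σ).entry i c = true
  · -- walk left to column 0, then down to (0,0)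
    have p1 : Relation.ReflTransGen (PMrel n σ) (i, (⟨0, hn⟩ : Fin n)) (i, j) := by
      have := seg_h (σ := σ) i ⟨0, hn⟩ (j : ℕ) (by simp) j.isLt
        (fun c _ h2 => hL c h2)
      simpa using this
    have p2 : Relation.ReflTransGen (PMrel n σ) ((⟨0, hn⟩ : Fin n), (⟨0, hn⟩ : Fin n))
        (i, (⟨0, hn⟩ : Fin n)) := by
      have := seg_v (σ := σ) ⟨0, hn⟩ ⟨0, hn⟩ (i : ℕ) (by simp) i.isLt
        (fun c _ _ => col0_true hn c)
      simpa using this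
    exact (((@Relation.ReflTransGen.stdSymm _ _ ⟨fun _ _ h => PMrel_symm h⟩).symm _ _) (p2.trans p1))
  · -- there is a hole to the left; walk right to column n-1
    push_neg at hL
    obtain ⟨c, hcj, hc⟩ := hL
    have hchole : isHole σ (i : ℕ) (c : ℕ) := by
      rw [← PM_entry_false_iff]
      cases h : (PM n σ).entry i c
      · rfl
      · exact absurd h hc
    have hclt : (c : ℕ) < (j : ℕ) := by
      rcases Nat.lt_or_ge (c : ℕ) (j : ℕ) with h | h
      · exact h
      · exfalso
        have : (c : ℕ) = (j : ℕ) := by omega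
        apply PM_entry_true_iff.mp ha
        have : c = j := Fin.ext this
        rwa [← this]
    have hR : ∀ c' : Fin n, (j : ℕ) ≤ (c' : ℕ) → (c' : ℕ) ≤ n - 1 →
        (PM n σ).entry i c' = true := by
      intro c' h1 _
      rw [PM_entry_true_iff]
      intro h'
      have := hole_row_unique hchole h'
      omega
    have p1 : Relation.ReflTransGen (PMrel n σ) (i, j) (i, (⟨n - 1, by omega⟩ : Fin n)) :=
      seg_h (σ := σ) i j (n - 1) (by omega) (by omega) hR
    have p2 : Relation.ReflTransGen (PMrel n σ) ((⟨0, hn⟩ : Fin n), (⟨n - 1, by omega⟩ : Fin n))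
        (i, (⟨n - 1, by omega⟩ : Fin n)) := by
      have := seg_v (σ := σ) ⟨n - 1, by omega⟩ ⟨0, hn⟩ (i : ℕ) (by simp) i.isLt
        (fun c _ _ => coln_true hn hk c _ rfl)
      simpa using this
    have p3 : Relation.ReflTransGen (PMrel n σ) ((⟨0, hn⟩ : Fin n), (⟨0, hn⟩ : Fin n))
        ((⟨0, hn⟩ : Fin n), (⟨n - 1, by omega⟩ : Fin n)) := by
      have := seg_h (σ := σ) ⟨0, hn⟩ ⟨0, hn⟩ (n - 1) (by simp) (by omega)
        (fun c _ _ => row0_true hn c)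
      simpa using this
    exact p1.trans (((@Relation.ReflTransGen.stdSymm _ _ ⟨fun _ _ h => PMrel_symm h⟩).symm _ _) (p3.trans p2))

lemma PM_polyomino (hn : 1 ≤ n) (hk : k + 2 ≤ n ∨ k = 0) : IsPolyomino (PM n σ) := by
  refine ⟨⟨⟨0, hn⟩, ⟨0, hn⟩, row0_true hn _⟩, ?_, ?_, ?_, ?_, ?_⟩
  · intro a b ha hb
    have pa := to_corner hn hk a ha
    have pb := to_corner hn hk b hb
    exact pa.trans (((@Relation.ReflTransGen.stdSymm _ _ ⟨fun _ _ h => PMrel_symm h⟩).symm _ _) pb)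
  · exact ⟨⟨0, hn⟩, ⟨0, hn⟩, row0_true hn _, rfl⟩
  · exact ⟨(⟨n - 1, by omega⟩ : Fin n), ⟨0, hn⟩, rown_true hn hk _ _ rfl, rfl⟩
  · exact ⟨⟨0, hn⟩, ⟨0, hn⟩, row0_true hn _, rfl⟩
  · exact ⟨⟨0, hn⟩, (⟨n - 1, by omega⟩ : Fin n), coln_true hn hk _ _ rfl, rfl⟩

lemma PM_not_sub_V : ¬ BMat.Sub Vrow (PM n σ) := by
  rintro ⟨f, g, hf, hg, he⟩
  have key : ∀ j : Fin Vrow.n, (j : ℕ) ≠ 1 →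
      isHole σ ((f ⟨0, by decide⟩ : Fin (PM n σ).m) : ℕ) ((g j : Fin (PM n σ).n) : ℕ) := by
    intro j hj
    have h := he ⟨0, by decide⟩ j
    rw [show Vrow.entry ⟨0, by decide⟩ j = false from by simp [Vrow, hj]] at h
    exact (PM_entry_false_iff (n := n)).mp h.symm
  have e0 := key ⟨0, by decide⟩ (by decide)
  have e2 := key ⟨2, by decide⟩ (by decide)
  have heq := hole_row_unique e0 e2
  have hlt := hg (show (⟨0, by decide⟩ : Fin Vrow.n) < ⟨2, by decide⟩ from by decide)
  rw [Fin.lt_def] at hlt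
  omega

lemma PM_not_sub_H : ¬ BMat.Sub Hcol (PM n σ) := by
  rintro ⟨f, g, hf, hg, he⟩
  have key : ∀ i : Fin Hcol.m, (i : ℕ) ≠ 1 →
      isHole σ ((f i : Fin (PM n σ).m) : ℕ) ((g ⟨0, by decide⟩ : Fin (PM n σ).n) : ℕ) := by
    intro i hi
    have h := he i ⟨0, by decide⟩
    rw [show Hcol.entry i ⟨0, by decide⟩ = false from by simp [Hcol, hi]] at h
    exact (PM_entry_false_iff (n := n)).mp h.symm
  have e0 := key ⟨0, by decide⟩ (by decide)
  have e2 := key ⟨2, by decide⟩ (by decide)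
  have heq := hole_col_unique e0 e2
  have hlt := hf (show (⟨0, by decide⟩ : Fin Hcol.m) < ⟨2, by decide⟩ from by decide)
  rw [Fin.lt_def] at hlt
  omega

lemma PM_injective (hk : k + 2 ≤ n ∨ k = 0) :
    Function.Injective (fun σ : Equiv.Perm (Fin k) => PM n σ) := by
  intro σ σ' h
  simp only [PM, BMat.mk.injEq, heq_eq_eq, true_and] at h
  ext t
  by_contra hne
  have hb : (t : ℕ) + 1 < n ∧ ((σ t : Fin k) : ℕ) + 1 < n := by
    have h1 : (t : ℕ) < k := t.isLt
    have h2 : ((σ t : Fin k) : ℕ) < k := (σ t).isLt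
    rcases hk with hk | hk
    · omega
    · omega
  have := congrFun (congrFun h ⟨(t : ℕ) + 1, hb.1⟩) ⟨((σ t : Fin k) : ℕ) + 1, hb.2⟩
  simp only [Bool.not_eq_not] at this
  have hL : isHole σ ((t : ℕ) + 1) (((σ t : Fin k) : ℕ) + 1) := ⟨t, rfl, rfl⟩
  have hR : isHole σ' ((t : ℕ) + 1) (((σ t : Fin k) : ℕ) + 1) := by
    have h' := (decide_eq_decide).mp (Bool.not_inj this)
    exact h'.mp hL
  obtain ⟨t', ht1, ht2⟩ := hR
  have htt : t' = t := Fin.ext (by omega)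
  apply hne
  rw [htt] at ht2
  omega

lemma main_bound (hn : 1 ≤ n) (k : ℕ) (hk : k + 2 ≤ n ∨ k = 0) :
    Nat.factorial k ≤
      Nat.card {P : BMat // P.m = n ∧ P.n = n ∧ IsPolyomino P ∧
        ¬ BMat.Sub Vrow P ∧ ¬ BMat.Sub Hcol P} := by
  classical
  set S := {P : BMat // P.m = n ∧ P.n = n ∧ IsPolyomino P ∧
        ¬ BMat.Sub Vrow P ∧ ¬ BMat.Sub Hcol P}
  have hfin : Finite S := by
    have : Function.Injective (fun P : S => fun (i j : Fin n) =>
        P.1.entry (Fin.cast P.2.1.symm i) (Fin.cast P.2.2.1.symm j)) := by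
      rintro ⟨⟨m1, n1, e1⟩, hm1, hn1, _⟩ ⟨⟨m2, n2, e2⟩, hm2, hn2, _⟩ h
      simp only at hm1 hn1 hm2 hn2
      subst hm1; subst hn1; subst hm2; subst hn2
      simp only at h
      refine Subtype.ext ?_
      simp only [BMat.mk.injEq, heq_eq_eq, true_and]
      funext i j
      have := congrFun (congrFun h i) j
      simpa using this
    exact Finite.of_injective _ this
  have hF : Function.Injective (fun σ : Equiv.Perm (Fin k) =>
      (⟨PM n σ, rfl, rfl, PM_polyomino hn hk, PM_not_sub_V, PM_not_sub_H⟩ : S)) := by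
    intro σ σ' h
    exact PM_injective hk (congrArg Subtype.val h)
  calc Nat.factorial k = Nat.card (Equiv.Perm (Fin k)) := by
        rw [Nat.card_eq_fintype_card]
        simp [Fintype.card_perm]
      _ ≤ Nat.card S := Nat.card_le_card_of_injective _ hF

end Aux

theorem stmt_19 (n : ℕ) (hn : 1 ≤ n) :
    Nat.factorial (n / 2) ≤
      Nat.card {P : BMat // P.m = n ∧ P.n = n ∧ IsPolyomino P ∧
        ¬ BMat.Sub Vrow P ∧ ¬ BMat.Sub Hcol P} := by
  rcases le_or_gt n 2 with h | h
  · have hfact : n / 2 = 0 ∨ n / 2 = 1 := by omega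
    have : Nat.factorial (n / 2) = Nat.factorial 0 := by
      rcases hfact with h' | h' <;> simp [h', Nat.factorial]
    rw [this]
    exact main_bound hn 0 (Or.inr rfl)
  · exact main_bound hn (n / 2) (Or.inl (by omega))
end
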